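/- Under the standing assumption, the gauge ‖·‖_φ̂ is order-continuous on M^φ̂_u: if (X_n) is a sequence with |X_n| ≤ |Y| a.s. for all n for some Y ∈ M^φ̂_u and X_n → 0 a.s., then ‖X_n‖_φ̂ → 0. -/

import Mathlib

open MeasureTheory Filter Topology
open scoped ENNReal

noncomputable section

namespace MaxLebExt

variable {Ω : Type*} [MeasurableSpace Ω]

/-- Membership in `L^∞(μ)`. -/
def MemLinf (μ : Measure Ω) (X : Ω → ℝ) : Prop :=
  MemLp X ⊤ μ

/-- Extended-real-valued expectation `𝔼[f] ∈ [-∞,∞]`, defined as the integral of the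
positive part minus the integral of the negative part. -/
def eE (μ : Measure Ω) (f : Ω → ℝ) : EReal :=
  ((∫⁻ ω, ENNReal.ofReal (f ω) ∂μ : ℝ≥0∞) : EReal) -
    ((∫⁻ ω, ENNReal.ofReal (-f ω) ∂μ : ℝ≥0∞) : EReal)

/-- The conjugate `φ*(Z) = sup_{X ∈ L^∞} (𝔼[XZ] - φ(X)) ∈ (-∞,∞]` of a function `φ`
defined (at least) on `L^∞`. -/
def conj (μ : Measure Ω) (φ : (Ω → ℝ) → ℝ) (Z : Ω → ℝ) : EReal :=
  ⨆ X : {X : Ω → ℝ // MemLinf μ X}, (((∫ ω, X.1 ω * Z ω ∂μ) - φ X.1 : ℝ) : EReal)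

/-- `Z ∈ dom φ* = {Z ∈ L¹ : φ*(Z) < ∞}`. -/
def MemDom (μ : Measure Ω) (φ : (Ω → ℝ) → ℝ) (Z : Ω → ℝ) : Prop :=
  Integrable Z μ ∧ conj μ φ Z < ⊤

/-- `X ∈ 𝒟₀ = {X ∈ L⁰ : X⁻ Z ∈ L¹ for all Z ∈ dom φ*}`. -/
def MemD0 (μ : Measure Ω) (φ : (Ω → ℝ) → ℝ) (X : Ω → ℝ) : Prop :=
  AEStronglyMeasurable X μ ∧
    ∀ Z : Ω → ℝ, MemDom μ φ Z → Integrable (fun ω => max (-(X ω)) 0 * Z ω) μ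

/-- The canonical extension `φ̂(X) = sup_{Z ∈ dom φ*} (𝔼[XZ] - φ*(Z))`. -/
def hatphi (μ : Measure Ω) (φ : (Ω → ℝ) → ℝ) (X : Ω → ℝ) : EReal :=
  ⨆ Z : {Z : Ω → ℝ // MemDom μ φ Z},
    (eE μ (fun ω => X ω * Z.1 ω) - conj μ φ Z.1)

/-- The truncated tail `α|X| 1_{{|X| > N}}`. -/
def tailFn (X : Ω → ℝ) (α : ℝ) (N : ℕ) : Ω → ℝ :=
  Set.indicator {ω | (N : ℝ) < |X ω|} fun ω => α * |X ω|

/-- `X ∈ M^φ̂_u`. -/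
def MemMu (μ : Measure Ω) (φ : (Ω → ℝ) → ℝ) (X : Ω → ℝ) : Prop :=
  AEStronglyMeasurable X μ ∧
    ∀ α : ℝ, 0 < α →
      Tendsto (fun N : ℕ => hatphi μ φ (tailFn X α N)) atTop (𝓝 (0 : EReal))

/-- `X ∈ M^φ̂` (the Orlicz heart of `φ̂`). -/
def MemM (μ : Measure Ω) (φ : (Ω → ℝ) → ℝ) (X : Ω → ℝ) : Prop :=
  AEStronglyMeasurable X μ ∧
    ∀ α : ℝ, 0 < α → hatphi μ φ (fun ω => α * |X ω|) < ⊤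

/-- A finite monotone convex function on `L^∞`, compatible with a.e. equality. -/
structure IsMCLinf (μ : Measure Ω) (φ : (Ω → ℝ) → ℝ) : Prop where
  congr : ∀ X Y : Ω → ℝ, MemLinf μ X → MemLinf μ Y → X =ᵐ[μ] Y → φ X = φ Y
  mono : ∀ X Y : Ω → ℝ, MemLinf μ X → MemLinf μ Y → X ≤ᵐ[μ] Y → φ X ≤ φ Y
  convex : ∀ X Y : Ω → ℝ, MemLinf μ X → MemLinf μ Y → ∀ t : ℝ, 0 ≤ t → t ≤ 1 →
    φ (fun ω => t * X ω + (1 - t) * Y ω) ≤ t * φ X + (1 - t) * φ Y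

/-- The Lebesgue property on `L^∞`. -/
def LebesgueLinf (μ : Measure Ω) (φ : (Ω → ℝ) → ℝ) : Prop :=
  ∀ (X : ℕ → Ω → ℝ) (X₀ : Ω → ℝ), (∀ n, MemLinf μ (X n)) → MemLinf μ X₀ →
    (∃ C : ℝ, ∀ n, ∀ᵐ ω ∂μ, |X n ω| ≤ C) →
    (∀ᵐ ω ∂μ, Tendsto (fun n => X n ω) atTop (𝓝 (X₀ ω))) →
    Tendsto (fun n => φ (X n)) atTop (𝓝 (φ X₀))

/-- The Fatou property on `L^∞`. -/
def FatouLinf (μ : Measure Ω) (φ : (Ω → ℝ) → ℝ) : Prop :=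
  ∀ (X : ℕ → Ω → ℝ) (X₀ : Ω → ℝ), (∀ n, MemLinf μ (X n)) → MemLinf μ X₀ →
    (∃ C : ℝ, ∀ n, ∀ᵐ ω ∂μ, |X n ω| ≤ C) →
    (∀ᵐ ω ∂μ, Tendsto (fun n => X n ω) atTop (𝓝 (X₀ ω))) →
    φ X₀ ≤ liminf (fun n => φ (X n)) atTop

/-- Standing assumption: `φ₀` is a finite monotone convex function on `L^∞` with the
Lebesgue property and `φ₀(0) = 0`. -/
structure Standing (μ : Measure Ω) (φ₀ : (Ω → ℝ) → ℝ) : Prop where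
  mc : IsMCLinf μ φ₀
  leb : LebesgueLinf μ φ₀
  zero : φ₀ 0 = 0

/-- A solid vector subspace (ideal) of `L⁰`. -/
structure IsSolidSpace (μ : Measure Ω) (S : Set (Ω → ℝ)) : Prop where
  aesm : ∀ X ∈ S, AEStronglyMeasurable X μ
  zero : (0 : Ω → ℝ) ∈ S
  add : ∀ X ∈ S, ∀ Y ∈ S, X + Y ∈ S
  smul : ∀ c : ℝ, ∀ X ∈ S, (fun ω => c * X ω) ∈ S
  solid : ∀ X : Ω → ℝ, AEStronglyMeasurable X μ → ∀ Y ∈ S,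
    (∀ᵐ ω ∂μ, |X ω| ≤ |Y ω|) → X ∈ S

/-- A finite monotone convex function on a solid space `S`. -/
structure IsMCOn (μ : Measure Ω) (S : Set (Ω → ℝ)) (ψ : (Ω → ℝ) → ℝ) : Prop where
  congr : ∀ X ∈ S, ∀ Y ∈ S, X =ᵐ[μ] Y → ψ X = ψ Y
  mono : ∀ X ∈ S, ∀ Y ∈ S, X ≤ᵐ[μ] Y → ψ X ≤ ψ Y
  convex : ∀ X ∈ S, ∀ Y ∈ S, ∀ t : ℝ, 0 ≤ t → t ≤ 1 →
    ψ (fun ω => t * X ω + (1 - t) * Y ω) ≤ t * ψ X + (1 - t) * ψ Y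

/-- The Lebesgue property on a solid space `S`. -/
def LebesgueOn (μ : Measure Ω) (S : Set (Ω → ℝ)) (ψ : (Ω → ℝ) → ℝ) : Prop :=
  ∀ (X : ℕ → Ω → ℝ) (X₀ Y : Ω → ℝ), (∀ n, X n ∈ S) → X₀ ∈ S → Y ∈ S →
    (∀ n, ∀ᵐ ω ∂μ, |X n ω| ≤ Y ω) →
    (∀ᵐ ω ∂μ, Tendsto (fun n => X n ω) atTop (𝓝 (X₀ ω))) →
    Tendsto (fun n => ψ (X n)) atTop (𝓝 (ψ X₀))

/-- The Fatou property on a solid space `S`. -/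
def FatouOn (μ : Measure Ω) (S : Set (Ω → ℝ)) (ψ : (Ω → ℝ) → ℝ) : Prop :=
  ∀ (X : ℕ → Ω → ℝ) (X₀ Y : Ω → ℝ), (∀ n, X n ∈ S) → X₀ ∈ S → Y ∈ S →
    (∀ n, ∀ᵐ ω ∂μ, |X n ω| ≤ Y ω) →
    (∀ᵐ ω ∂μ, Tendsto (fun n => X n ω) atTop (𝓝 (X₀ ω))) →
    ψ X₀ ≤ liminf (fun n => ψ (X n)) atTop

/-- A proper monotone convex function with values in `(-∞,∞]` on a solid space `S`. -/
structure IsMCOnE (μ : Measure Ω) (S : Set (Ω → ℝ)) (φ : (Ω → ℝ) → EReal) : Prop where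
  congr : ∀ X ∈ S, ∀ Y ∈ S, X =ᵐ[μ] Y → φ X = φ Y
  mono : ∀ X ∈ S, ∀ Y ∈ S, X ≤ᵐ[μ] Y → φ X ≤ φ Y
  convex : ∀ X ∈ S, ∀ Y ∈ S, ∀ t : ℝ, 0 < t → t < 1 →
    φ (fun ω => t * X ω + (1 - t) * Y ω) ≤ (t : EReal) * φ X + ((1 - t : ℝ) : EReal) * φ Y
  ne_bot : ∀ X ∈ S, φ X ≠ ⊥
  exists_ne_top : ∃ X ∈ S, φ X ≠ ⊤

/-- The Lebesgue property on a solid space `S` for an extended-real-valued function. -/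
def LebesgueOnE (μ : Measure Ω) (S : Set (Ω → ℝ)) (φ : (Ω → ℝ) → EReal) : Prop :=
  ∀ (X : ℕ → Ω → ℝ) (X₀ Y : Ω → ℝ), (∀ n, X n ∈ S) → X₀ ∈ S → Y ∈ S →
    (∀ n, ∀ᵐ ω ∂μ, |X n ω| ≤ Y ω) →
    (∀ᵐ ω ∂μ, Tendsto (fun n => X n ω) atTop (𝓝 (X₀ ω))) →
    Tendsto (fun n => φ (X n)) atTop (𝓝 (φ X₀))

/-- `(φ, S)` is a Lebesgue extension of `(φ₀, L^∞)`. -/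
structure IsLebExt (μ : Measure Ω) (φ₀ : (Ω → ℝ) → ℝ)
    (S : Set (Ω → ℝ)) (φ : (Ω → ℝ) → EReal) : Prop where
  solid : IsSolidSpace μ S
  linf_mem : ∀ X : Ω → ℝ, MemLinf μ X → X ∈ S
  mc : IsMCOnE μ S φ
  leb : LebesgueOnE μ S φ
  restrict : ∀ X : Ω → ℝ, MemLinf μ X → φ X = (φ₀ X : EReal)

/-- The gauge (Luxemburg-type) functional `‖X‖_φ̂ = inf {λ > 0 : φ̂(|X|/λ) ≤ 1}`,
with `inf ∅ = +∞`. -/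
def gauge (μ : Measure Ω) (φ : (Ω → ℝ) → ℝ) (X : Ω → ℝ) : EReal :=
  sInf {l : EReal | ∃ r : ℝ, 0 < r ∧ l = (r : EReal) ∧
    hatphi μ φ (fun ω => |X ω| / r) ≤ 1}

/-! Fix `r > 0` and split `|X_n|/r ≤ ½ · (2/r)|Y|1_{|Y|>N} + ½ · (2/r)(|X_n| ∧ N)`.
Since `Y ∈ M^φ̂_u`, the first term has `φ̂ ≤ 1` for a suitable `N`. The second term lies in
`L^∞`, where `φ̂ ≤ φ₀`, and tends to `0` boundedly, so its `φ₀` tends to `φ₀(0) = 0` by the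
Lebesgue property. Monotonicity of `φ₀` forces every `Z ∈ dom φ₀*` to be nonnegative, so the
sublevel set `{φ̂ ≤ 1}` is convex and solid among nonnegative functions; hence eventually
`φ̂(|X_n|/r) ≤ 1`, i.e. `‖X_n‖_φ̂ ≤ r`. -/

variable {μ : Measure Ω} {φ : (Ω → ℝ) → ℝ}

lemma le_conj {X : Ω → ℝ} (hX : MemLinf μ X) (Z : Ω → ℝ) :
    (((∫ ω, X ω * Z ω ∂μ) - φ X : ℝ) : EReal) ≤ conj μ φ Z :=
  le_iSup (fun X : {X : Ω → ℝ // MemLinf μ X} =>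
    (((∫ ω, X.1 ω * Z ω ∂μ) - φ X.1 : ℝ) : EReal)) ⟨X, hX⟩

lemma conj_ne_bot (Z : Ω → ℝ) : conj μ φ Z ≠ ⊥ :=
  ne_bot_of_le_ne_bot (EReal.coe_ne_bot _) (le_conj (φ := φ) (MemLp.zero (μ := μ)) Z)

lemma MemDom.coe_toReal_conj {Z : Ω → ℝ} (hZ : MemDom μ φ Z) :
    ((conj μ φ Z).toReal : EReal) = conj μ φ Z :=
  EReal.coe_toReal hZ.2.ne (conj_ne_bot Z)

lemma le_hatphi {Z : Ω → ℝ} (hZ : MemDom μ φ Z) (X : Ω → ℝ) :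
    eE μ (fun ω => X ω * Z ω) - conj μ φ Z ≤ hatphi μ φ X :=
  le_iSup (fun Z : {Z : Ω → ℝ // MemDom μ φ Z} =>
    eE μ (fun ω => X ω * Z.1 ω) - conj μ φ Z.1) ⟨Z, hZ⟩

lemma eE_of_nonneg {f : Ω → ℝ} (hf : 0 ≤ᵐ[μ] f) :
    eE μ f = ((∫⁻ ω, ENNReal.ofReal (f ω) ∂μ : ℝ≥0∞) : EReal) := by
  have hneg : ∫⁻ ω, ENNReal.ofReal (-f ω) ∂μ = 0 :=
    lintegral_eq_zero_of_ae_eq_zero <| hf.mono fun ω hω => by simpa using hω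
  simp [eE, hneg]

lemma eE_of_integrable {f : Ω → ℝ} (hf : Integrable f μ) :
    eE μ f = ((∫ ω, f ω ∂μ : ℝ) : EReal) := by
  have hfin : ∀ g : Ω → ℝ, Integrable g μ → ∫⁻ ω, ENNReal.ofReal (g ω) ∂μ ≠ ⊤ := fun g hg =>
    ((lintegral_mono fun ω => Real.ofReal_le_enorm (g ω)).trans_lt hg.2).ne
  rw [eE, integral_eq_lintegral_pos_part_sub_lintegral_neg_part hf, EReal.coe_sub,
    EReal.coe_ennreal_toReal (hfin f hf), EReal.coe_ennreal_toReal (hfin (fun ω => -f ω) hf.neg)]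

lemma hatphi_le_of_memLinf {X : Ω → ℝ} (hX : MemLinf μ X) : hatphi μ φ X ≤ φ X := by
  refine iSup_le fun ⟨Z, hZ⟩ => ?_
  have hXZ : Integrable (fun ω => X ω * Z ω) μ := hZ.1.mul_of_top_right hX
  rw [eE_of_integrable hXZ, ← hZ.coe_toReal_conj]
  have := le_conj (φ := φ) hX Z
  rw [← hZ.coe_toReal_conj] at this
  norm_cast at this ⊢
  linarith

lemma memDom_nonneg (hmono : ∀ X Y : Ω → ℝ, MemLinf μ X → MemLinf μ Y → X ≤ᵐ[μ] Y → φ X ≤ φ Y)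
    {Z : Ω → ℝ} (hZ : MemDom μ φ Z) : 0 ≤ᵐ[μ] Z := by
  set A := {ω | hZ.1.1.mk Z ω < 0}
  have hA : MeasurableSet A := measurableSet_lt hZ.1.1.stronglyMeasurable_mk.measurable
    measurable_const
  set m := ∫ ω, max (-Z ω) 0 ∂μ
  -- `X_k = -k · 1_{Z < 0}` has `φ(X_k) ≤ φ(0)` and `𝔼[X_k Z] = k 𝔼[Z⁻]`, while `φ*(Z) < ∞`
  have hconj : ∀ k : ℕ, k * m - φ 0 ≤ (conj μ φ Z).toReal := by
    intro k
    set X : Ω → ℝ := A.indicator fun _ => -(k : ℝ)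
    have hX : MemLinf μ X := (memLp_top_const _).indicator hA
    have hXφ : φ X ≤ φ 0 := hmono X 0 hX MemLp.zero <| ae_of_all _ <|
      Set.indicator_nonpos fun _ _ => by simp
    have hXZ : ∫ ω, X ω * Z ω ∂μ = k * m := by
      rw [← integral_const_mul]
      refine integral_congr_ae <| hZ.1.1.ae_eq_mk.mono fun ω hω => ?_
      by_cases hωA : ω ∈ A
      · have : Z ω < 0 := hω ▸ hωA
        simp [X, hωA, max_eq_left (by linarith : 0 ≤ -Z ω)]
      · have : 0 ≤ Z ω := hω ▸ not_lt.1 hωA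
        simp [X, hωA, this]
    have := le_conj (φ := φ) hX Z
    rw [← hZ.coe_toReal_conj, hXZ] at this
    have hle : k * m - φ X ≤ (conj μ φ Z).toReal := by exact_mod_cast this
    linarith
  have hm : m = 0 := by
    refine le_antisymm ?_ (integral_nonneg fun ω => le_max_right _ _)
    by_contra! hm
    obtain ⟨k, hk⟩ := exists_nat_gt (((conj μ φ Z).toReal + φ 0) / m)
    have := hconj k
    rw [div_lt_iff₀ hm] at hk
    linarith
  have := (integral_eq_zero_iff_of_nonneg (fun ω => le_max_right _ _) hZ.1.neg.pos_part).1 hm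
  filter_upwards [this] with ω hω
  simpa using hω

lemma integral_mul_le_of_hatphi_le {F Z : Ω → ℝ} {a : ℝ} (hF : AEStronglyMeasurable F μ)
    (hF0 : 0 ≤ᵐ[μ] F) (hZ : MemDom μ φ Z) (hZ0 : 0 ≤ᵐ[μ] Z) (hFa : hatphi μ φ F ≤ a) :
    Integrable (fun ω => F ω * Z ω) μ ∧ ∫ ω, F ω * Z ω ∂μ ≤ a + (conj μ φ Z).toReal := by
  have hFZ0 : 0 ≤ᵐ[μ] fun ω => F ω * Z ω := by
    filter_upwards [hF0, hZ0] with ω hFω hZω using mul_nonneg hFω hZω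
  have hle := (le_hatphi hZ F).trans hFa
  rw [← hZ.coe_toReal_conj] at hle
  have hint : Integrable (fun ω => F ω * Z ω) μ := by
    refine (lintegral_ofReal_ne_top_iff_integrable (hF.mul hZ.1.1) hFZ0).1 fun htop => ?_
    rw [eE_of_nonneg hFZ0, show ∫⁻ ω, ENNReal.ofReal (F ω * Z ω) ∂μ = ⊤ from htop] at hle
    simp at hle
  rw [eE_of_integrable hint] at hle
  have hle' : ∫ ω, F ω * Z ω ∂μ - (conj μ φ Z).toReal ≤ a := by exact_mod_cast hle
  exact ⟨hint, by linarith⟩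

lemma hatphi_le_of_ae_le_convexComb
    (hmono : ∀ X Y : Ω → ℝ, MemLinf μ X → MemLinf μ Y → X ≤ᵐ[μ] Y → φ X ≤ φ Y)
    {G T B : Ω → ℝ} {t a : ℝ} (ht0 : 0 ≤ t) (ht1 : t ≤ 1)
    (hG : AEStronglyMeasurable G μ) (hT : AEStronglyMeasurable T μ)
    (hB : AEStronglyMeasurable B μ) (hG0 : 0 ≤ᵐ[μ] G) (hT0 : 0 ≤ᵐ[μ] T) (hB0 : 0 ≤ᵐ[μ] B)
    (hGTB : ∀ᵐ ω ∂μ, G ω ≤ t * T ω + (1 - t) * B ω)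
    (hTa : hatphi μ φ T ≤ a) (hBa : hatphi μ φ B ≤ a) : hatphi μ φ G ≤ a := by
  refine iSup_le fun ⟨Z, hZ⟩ => ?_
  have hZ0 := memDom_nonneg hmono hZ
  obtain ⟨hTZ, hTZa⟩ := integral_mul_le_of_hatphi_le hT hT0 hZ hZ0 hTa
  obtain ⟨hBZ, hBZa⟩ := integral_mul_le_of_hatphi_le hB hB0 hZ hZ0 hBa
  have hGZ0 : ∀ᵐ ω ∂μ, 0 ≤ G ω * Z ω := by
    filter_upwards [hG0, hZ0] with ω hGω hZω using mul_nonneg hGω hZω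
  have hGZle : ∀ᵐ ω ∂μ, G ω * Z ω ≤ t * (T ω * Z ω) + (1 - t) * (B ω * Z ω) := by
    filter_upwards [hGTB, hZ0] with ω hω hZω
    nlinarith [mul_le_mul_of_nonneg_right hω hZω]
  have hbound := (hTZ.const_mul t).add (hBZ.const_mul (1 - t))
  have hGZ : Integrable (fun ω => G ω * Z ω) μ := by
    refine hbound.mono' (hG.mul hZ.1.1) ?_
    filter_upwards [hGZ0, hGZle] with ω h0 hle
    rwa [Real.norm_of_nonneg h0]
  have hint : ∫ ω, G ω * Z ω ∂μ ≤ t * ∫ ω, T ω * Z ω ∂μ + (1 - t) * ∫ ω, B ω * Z ω ∂μ := by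
    rw [← integral_const_mul, ← integral_const_mul, ← integral_add (hTZ.const_mul t)
      (hBZ.const_mul (1 - t))]
    exact integral_mono_ae hGZ hbound hGZle
  rw [eE_of_integrable hGZ, ← hZ.coe_toReal_conj]
  have := mul_le_mul_of_nonneg_left hTZa ht0
  have := mul_le_mul_of_nonneg_left hBZa (sub_nonneg.2 ht1)
  exact_mod_cast (by nlinarith : ∫ ω, G ω * Z ω ∂μ - (conj μ φ Z).toReal ≤ a)

lemma aestronglyMeasurable_tailFn {Y : Ω → ℝ} (hY : AEStronglyMeasurable Y μ) (α : ℝ) (N : ℕ) :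
    AEStronglyMeasurable (tailFn Y α N) μ :=
  (((measurable_const.mul measurable_abs).indicator
    (measurableSet_lt measurable_const measurable_abs)).comp_aemeasurable
      hY.aemeasurable).aestronglyMeasurable

lemma ae_mul_abs_le_tailFn_add {X Y : Ω → ℝ} (hXY : ∀ᵐ ω ∂μ, |X ω| ≤ |Y ω|) {α : ℝ}
    (hα : 0 ≤ α) (N : ℕ) : ∀ᵐ ω ∂μ, α * |X ω| ≤ tailFn Y α N ω + α * min |X ω| N := by
  filter_upwards [hXY] with ω hω
  by_cases hN : (N : ℝ) < |Y ω|
  · have hmin : 0 ≤ min |X ω| (N : ℝ) := le_min (abs_nonneg _) N.cast_nonneg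
    simp only [tailFn, Set.indicator_of_mem (show ω ∈ {ω | (N : ℝ) < |Y ω|} from hN)]
    nlinarith [mul_le_mul_of_nonneg_left hω hα, mul_nonneg hα hmin]
  · simp [tailFn, hN, min_eq_left (hω.trans (not_lt.1 hN))]

lemma abs_mul_min_abs_le (α x c : ℝ) : |α * min |x| c| ≤ |α| * |c| := by
  rw [abs_mul]
  refine mul_le_mul_of_nonneg_left (abs_le.2 ⟨le_min ?_ (neg_abs_le c), ?_⟩) (abs_nonneg α)
  · linarith [abs_nonneg x, abs_nonneg c]
  · exact (min_le_right _ _).trans (le_abs_self c)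

lemma memLinf_mul_min_abs {X : Ω → ℝ} (hX : AEStronglyMeasurable X μ) (α c : ℝ) :
    MemLinf μ (fun ω => α * min |X ω| c) :=
  memLp_top_of_bound (hX.norm.inf aestronglyMeasurable_const |>.const_mul α) (|α| * |c|)
    (ae_of_all _ fun ω => abs_mul_min_abs_le α (X ω) c)

lemma tendsto_phi_mul_min_abs (hleb : LebesgueLinf μ φ) {X : ℕ → Ω → ℝ}
    (hmeas : ∀ n, AEStronglyMeasurable (X n) μ)
    (hconv : ∀ᵐ ω ∂μ, Tendsto (fun n => X n ω) atTop (𝓝 0)) (α : ℝ) {c : ℝ} (hc : 0 ≤ c) :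
    Tendsto (fun n => φ (fun ω => α * min |X n ω| c)) atTop (𝓝 (φ 0)) := by
  refine hleb _ 0 (fun n => memLinf_mul_min_abs (hmeas n) α c) MemLp.zero
    ⟨|α| * |c|, fun n => ae_of_all _ fun ω => abs_mul_min_abs_le α (X n ω) c⟩ ?_
  filter_upwards [hconv] with ω hω
  simpa [min_eq_left hc] using ((hω.abs.min tendsto_const_nhds).const_mul α :
    Tendsto (fun n => α * min |X n ω| c) atTop (𝓝 (α * min |0| c)))

lemma gauge_nonneg (X : Ω → ℝ) : 0 ≤ gauge μ φ X :=
  le_sInf fun _ ⟨_, hr, hl, _⟩ => hl ▸ EReal.coe_nonneg.2 hr.le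

lemma gauge_le_of_hatphi_le_one {X : Ω → ℝ} {r : ℝ} (hr : 0 < r)
    (hX : hatphi μ φ (fun ω => |X ω| / r) ≤ 1) : gauge μ φ X ≤ r :=
  sInf_le ⟨r, hr, rfl, hX⟩

lemma eventually_hatphi_abs_div_le_one (h : Standing μ φ) {X : ℕ → Ω → ℝ} {Y : Ω → ℝ}
    (hY : MemMu μ φ Y) (hmeas : ∀ n, AEStronglyMeasurable (X n) μ)
    (hdom : ∀ n, ∀ᵐ ω ∂μ, |X n ω| ≤ |Y ω|)
    (hconv : ∀ᵐ ω ∂μ, Tendsto (fun n => X n ω) atTop (𝓝 0)) {r : ℝ} (hr : 0 < r) :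
    ∀ᶠ n in atTop, hatphi μ φ (fun ω => |X n ω| / r) ≤ 1 := by
  have hα : 0 ≤ 2 / r := by positivity
  obtain ⟨N, hN⟩ :=
    ((hY.2 (2 / r) (by positivity)).eventually_lt_const (by norm_num : (0 : EReal) < 1)).exists
  have htrunc := (tendsto_phi_mul_min_abs h.leb hmeas hconv (2 / r)
    N.cast_nonneg).eventually_lt_const (h.zero ▸ one_pos)
  filter_upwards [htrunc] with n hn
  refine hatphi_le_of_ae_le_convexComb h.mc.mono (t := 1 / 2) (by norm_num) (by norm_num)
    ((hmeas n).norm.aemeasurable.div_const r).aestronglyMeasurable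
    (aestronglyMeasurable_tailFn hY.1 _ N)
    (memLinf_mul_min_abs (hmeas n) _ _).1 (ae_of_all _ fun ω => by positivity)
    (ae_of_all _ fun ω => Set.indicator_nonneg (fun _ _ => by positivity) ω)
    (ae_of_all _ fun ω => mul_nonneg hα (le_min (abs_nonneg _) N.cast_nonneg)) ?_ hN.le
    ((hatphi_le_of_memLinf (memLinf_mul_min_abs (hmeas n) _ _)).trans (by exact_mod_cast hn.le))
  filter_upwards [ae_mul_abs_le_tailFn_add (hdom n) hα N] with ω hω
  calc |X n ω| / r = 1 / 2 * (2 / r * |X n ω|) := by field_simp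
    _ ≤ _ := by linarith

theorem stmt9_general (μ : Measure Ω)
    (φ₀ : (Ω → ℝ) → ℝ) (h : Standing μ φ₀)
    (X : ℕ → Ω → ℝ) (Y : Ω → ℝ) (hY : MemMu μ φ₀ Y)
    (hmeas : ∀ n, AEStronglyMeasurable (X n) μ)
    (hdom : ∀ n, ∀ᵐ ω ∂μ, |X n ω| ≤ |Y ω|)
    (hconv : ∀ᵐ ω ∂μ, Tendsto (fun n => X n ω) atTop (𝓝 (0 : ℝ))) :
    Tendsto (fun n => gauge μ φ₀ (X n)) atTop (𝓝 (0 : EReal)) := by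
  refine tendsto_order.2 ⟨fun a ha => .of_forall fun n => ha.trans_le (gauge_nonneg _),
    fun a ha => ?_⟩
  obtain ⟨r, hr0, hra⟩ := EReal.exists_between_coe_real ha
  have hr : (0 : ℝ) < r := by exact_mod_cast hr0
  filter_upwards [eventually_hatphi_abs_div_le_one h hY hmeas hdom hconv hr] with n hn
  exact (gauge_le_of_hatphi_le_one hr hn).trans_lt hra

/-- the gauge `‖·‖_φ̂` is order-continuous on `M^φ̂_u`: if `|X_n| ≤ |Y|`
a.s. for all `n` with `Y ∈ M^φ̂_u` and `X_n → 0` a.s., then `‖X_n‖_φ̂ → 0`. -/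
theorem stmt9 (μ : Measure Ω) [IsProbabilityMeasure μ]
    (φ₀ : (Ω → ℝ) → ℝ) (h : Standing μ φ₀)
    (X : ℕ → Ω → ℝ) (Y : Ω → ℝ) (hY : MemMu μ φ₀ Y)
    (hmeas : ∀ n, AEStronglyMeasurable (X n) μ)
    (hdom : ∀ n, ∀ᵐ ω ∂μ, |X n ω| ≤ |Y ω|)
    (hconv : ∀ᵐ ω ∂μ, Tendsto (fun n => X n ω) atTop (𝓝 (0 : ℝ))) :
    Tendsto (fun n => gauge μ φ₀ (X n)) atTop (𝓝 (0 : EReal)) :=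
  stmt9_general μ φ₀ h X Y hY hmeas hdom hconv

end MaxLebExt
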